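/- arXiv:1808.03428 — 2 statements merged into one kernel-verified Lean document; each statement's English description precedes it below -/
import Mathlib

section
/- Let f : ℂ → ℂ be continuous on the closed unit disc {z : |z| ≤ 1} and complex differentiable on the open unit disc {z : |z| < 1}. Suppose that for every integer n ≥ 0 one has ∫_0^{2π} f(e^{iθ}) · e^{−inθ} dθ = 0. Then f vanishes identically on the closed unit disc. -/
open Complex Metric intervalIntegral Set

theorem vanishing_nonneg_fourier_coeffs (f : ℂ → ℂ)
    (hc : ContinuousOn f (Metric.closedBall 0 1))
    (hd : DifferentiableOn ℂ f (Metric.ball 0 1))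
    (hF : ∀ n : ℕ,
      (∫ θ in (0 : ℝ)..(2 * Real.pi),
        f (Complex.exp (θ * Complex.I)) * Complex.exp (-(n : ℂ) * θ * Complex.I)) = 0) :
    ∀ z ∈ Metric.closedBall (0 : ℂ) 1, f z = 0 := by
  -- continuity of θ ↦ f (exp (θ I))
  have hmem : ∀ θ : ℝ, Complex.exp (θ * Complex.I) ∈ Metric.closedBall (0:ℂ) 1 := by
    intro θ
    simp [mem_closedBall_zero_iff, Complex.norm_exp]
  have hcont : Continuous fun θ : ℝ => f (Complex.exp (θ * Complex.I)) := by
    apply hc.comp_continuous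
    · exact Complex.continuous_exp.comp (by continuity)
    · exact hmem
  -- bound on f on the circle
  obtain ⟨C, hC0, hCb⟩ : ∃ C : ℝ, 0 ≤ C ∧ ∀ θ : ℝ, ‖f (Complex.exp (θ * Complex.I))‖ ≤ C := by
    obtain ⟨C, hC⟩ := (isCompact_closedBall (0:ℂ) 1).exists_bound_of_continuousOn hc
    exact ⟨max C 0, le_max_right _ _, fun θ =>
      le_trans (hC _ (hmem θ)) (le_max_left _ _)⟩
  have key : ∀ z ∈ Metric.ball (0:ℂ) 1, f z = 0 := by
    intro z hz
    have hznorm : ‖z‖ < 1 := by simpa [mem_ball_zero_iff] using hz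
    -- Cauchy integral formula
    have hCauchy : (∮ w in C(0, 1), (w - z)⁻¹ • f w) = (2 * Real.pi * Complex.I : ℂ) • f z :=
      Complex.circleIntegral_sub_inv_smul_of_differentiable_on_off_countable
        Set.countable_empty hz hc
        (fun x hx => (hd.differentiableAt (isOpen_ball.mem_nhds hx.1)))
    -- continuous maps g n
    set g : ℕ → C(ℝ, ℂ) := fun n =>
      ⟨fun θ => (Complex.I * z ^ n) *
          (f (Complex.exp (θ * Complex.I)) * Complex.exp (-(n : ℂ) * θ * Complex.I)),
        by
          apply Continuous.mul continuous_const
          exact hcont.mul (Complex.continuous_exp.comp (by continuity))⟩ with hg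
    have hgnorm : ∀ n θ, ‖g n θ‖ ≤ C * ‖z‖ ^ n := by
      intro n θ
      have hre : ‖Complex.exp (-(n : ℂ) * θ * Complex.I)‖ = 1 := by
        rw [Complex.norm_exp]
        rw [show (-(n:ℂ) * θ * Complex.I).re = 0 by simp]
        exact Real.exp_zero
      have : ‖g n θ‖ = ‖z‖ ^ n * ‖f (Complex.exp (θ * Complex.I))‖ := by
        simp only [hg, ContinuousMap.coe_mk, norm_mul, norm_pow, hre, Complex.norm_I]
        ring
      rw [this]
      calc ‖z‖ ^ n * ‖f (Complex.exp (θ * Complex.I))‖ ≤ ‖z‖ ^ n * C :=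
            mul_le_mul_of_nonneg_left (hCb θ) (by positivity)
        _ = C * ‖z‖ ^ n := mul_comm _ _
    -- summability of sup norms
    have hsum : Summable fun n : ℕ =>
        ‖(g n).restrict (⟨Set.uIcc (0:ℝ) (2 * Real.pi), isCompact_uIcc⟩ : TopologicalSpace.Compacts ℝ)‖ := by
      apply Summable.of_nonneg_of_le (fun n => norm_nonneg _) (fun n => ?_)
        ((summable_geometric_of_lt_one (norm_nonneg z) hznorm).mul_left C)
      apply ContinuousMap.norm_le _ (by positivity) |>.2
      intro x
      exact hgnorm n x
    -- swap sum and integral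
    have hswap := intervalIntegral.hasSum_intervalIntegral_of_summable_norm
      (a := (0:ℝ)) (b := 2 * Real.pi) hsum
    -- each integral is zero
    have hzero : ∀ n : ℕ, (∫ θ in (0:ℝ)..(2 * Real.pi), g n θ) = 0 := by
      intro n
      have : (∫ θ in (0:ℝ)..(2 * Real.pi), g n θ)
          = (Complex.I * z ^ n) * ∫ θ in (0:ℝ)..(2 * Real.pi),
              f (Complex.exp (θ * Complex.I)) * Complex.exp (-(n : ℂ) * θ * Complex.I) := by
        rw [← intervalIntegral.integral_const_mul]
        rfl
      rw [this, hF n, mul_zero]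
    -- identify circle integral with the integral of the sum
    have hpt : ∀ θ : ℝ, (deriv (circleMap 0 1) θ) •
        ((circleMap 0 1 θ - z)⁻¹ • f (circleMap 0 1 θ)) = ∑' n : ℕ, g n θ := by
      intro θ
      have hne : Complex.exp (θ * Complex.I) ≠ 0 := Complex.exp_ne_zero _
      have hr : ‖z * Complex.exp (-(θ * Complex.I))‖ < 1 := by
        rw [norm_mul]
        simpa [Complex.norm_exp] using hznorm
      have hgeom := (hasSum_geometric_of_norm_lt_one hr)
      have hfun : ∀ n : ℕ, g n θ = (Complex.I * f (Complex.exp (θ * Complex.I))) *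
          (z * Complex.exp (-(θ * Complex.I))) ^ n := by
        intro n
        simp only [hg, ContinuousMap.coe_mk]
        rw [mul_pow, ← Complex.exp_nat_mul]
        ring_nf
      have hsum' : HasSum (fun n : ℕ => g n θ)
          ((Complex.I * f (Complex.exp (θ * Complex.I))) *
            (1 - z * Complex.exp (-(θ * Complex.I)))⁻¹) := by
        simpa only [hfun] using hgeom.mul_left (Complex.I * f (Complex.exp (θ * Complex.I)))
      rw [hsum'.tsum_eq]
      have h1 : (1 : ℂ) - z * Complex.exp (-(θ * Complex.I))
          = Complex.exp (-(θ * Complex.I)) * (Complex.exp (θ * Complex.I) - z) := by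
        rw [mul_sub, ← Complex.exp_add]
        simp [mul_comm]
      rw [h1, mul_inv, Complex.exp_neg, inv_inv]
      simp only [deriv_circleMap, circleMap, ofReal_one, one_mul, zero_add, smul_eq_mul]
      ring
    have hint : (∮ w in C(0, 1), (w - z)⁻¹ • f w) = 0 := by
      rw [circleIntegral]
      have : (∫ θ in (0:ℝ)..(2 * Real.pi), (deriv (circleMap 0 1) θ) •
          ((circleMap 0 1 θ - z)⁻¹ • f (circleMap 0 1 θ)))
          = ∫ θ in (0:ℝ)..(2 * Real.pi), ∑' n : ℕ, g n θ := by
        apply intervalIntegral.integral_congr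
        intro θ _
        exact hpt θ
      rw [this, ← hswap.tsum_eq]
      simp [hzero]
    rw [hint] at hCauchy
    have h2pi : (2 * Real.pi * Complex.I : ℂ) ≠ 0 := by
      simp [Real.pi_ne_zero, Complex.I_ne_zero, Complex.ofReal_ne_zero]
    have := hCauchy.symm
    rwa [smul_eq_mul, mul_eq_zero, or_iff_right h2pi] at this
  -- extend to the closed ball by continuity
  intro z hz
  rcases lt_or_eq_of_le (mem_closedBall_zero_iff.1 hz) with h | h
  · exact key z (by simpa [mem_ball_zero_iff] using h)
  · have hzc : z ∈ closure (Metric.ball (0:ℂ) 1) := by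
      rw [closure_ball (0:ℂ) one_ne_zero]
      exact hz
    have hne : (nhdsWithin z (Metric.ball (0:ℂ) 1)).NeBot :=
      mem_closure_iff_nhdsWithin_neBot.1 hzc
    have h1 : Filter.Tendsto f (nhdsWithin z (Metric.ball (0:ℂ) 1)) (nhds (f z)) :=
      ((hc z hz).mono Metric.ball_subset_closedBall).tendsto
    have h2 : Filter.Tendsto f (nhdsWithin z (Metric.ball (0:ℂ) 1)) (nhds 0) := by
      apply Filter.Tendsto.congr' _ tendsto_const_nhds
      filter_upwards [self_mem_nhdsWithin] with w hw
      exact (key w hw).symm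
    exact tendsto_nhds_unique h1 h2
end

section
/- Let Y be a smooth manifold. On the set Γ(Y) of pairs (ω, φ), where ω is a closed smooth differential form of even degree on Y and φ is an equivalence class of smooth odd-degree forms modulo exact forms, define (ω₁, φ₁) * (ω₂, φ₂) := (ω₁∧ω₂, ω₁∧φ₂ + φ₁∧ω₂ − dφ₁∧φ₂). Then: (1) the second component is well defined independently of the chosen representatives of φ₁ and φ₂ modulo exact forms; (2) * is commutative; (3) * is associative; (4) (1, 0) is a two-sided unit, where 1 is the constant function 1 regarded as a 0-form. -/
/-- The product on pairs (even closed form, odd form):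
`(ω₁, φ₁) * (ω₂, φ₂) = (ω₁∧ω₂, ω₁∧φ₂ + φ₁∧ω₂ − dφ₁∧φ₂)`.
Here `A` plays the role of even forms, `M` of odd forms, `d` of the exterior
derivative from odd to even forms. -/
def star17 {A M : Type*} [CommRing A] [AddCommGroup M] [Module A M]
    (d : M →+ A) (p q : A × M) : A × M :=
  (p.1 * q.1, p.1 • q.2 + q.1 • p.2 - d p.2 • q.2)

/-- `Γ(Y)` product properties: in an abstract setting of differential forms, where
`A` is the algebra of even forms, `M` the `A`-module of odd forms, `mul` the wedge
product of two odd forms, `D` the exterior derivative from even to odd forms and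
`d` the exterior derivative from odd to even forms, the pairing `star17` is
(1) well defined modulo exact odd forms in the second component,
(2) commutative, (3) associative, and (4) has `(1,0)` as a two-sided unit. -/
theorem gamma_pairing_ring_structure {A M : Type*} [CommRing A] [AddCommGroup M]
    [Module A M]
    (mul : M →ₗ[A] M →ₗ[A] A) (D : A →+ M) (d : M →+ A)
    (hD_leib : ∀ a b : A, D (a * b) = a • D b + b • D a)
    (hd_leib : ∀ (a : A) (m : M), d (a • m) = mul (D a) m + a * d m)
    (hdD : ∀ a : A, d (D a) = 0)
    (hDd : ∀ m : M, D (d m) = 0)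
    (hanti : ∀ m m' : M, mul m m' = - mul m' m)
    (hDmul : ∀ m m' : M, D (mul m m') = d m • m' - d m' • m) :
    -- (1) independence of the representatives modulo exact forms
    (∀ (ω₁ ω₂ : A) (φ₁ φ₂ : M) (α β : A), D ω₁ = 0 → D ω₂ = 0 →
      (star17 d (ω₁, φ₁ + D α) (ω₂, φ₂ + D β)).1 = (star17 d (ω₁, φ₁) (ω₂, φ₂)).1 ∧
      ∃ c : A, (star17 d (ω₁, φ₁ + D α) (ω₂, φ₂ + D β)).2 -
        (star17 d (ω₁, φ₁) (ω₂, φ₂)).2 = D c) ∧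
    -- (2) commutativity
    (∀ p q : A × M, D p.1 = 0 → D q.1 = 0 →
      (star17 d p q).1 = (star17 d q p).1 ∧
      ∃ c : A, (star17 d p q).2 - (star17 d q p).2 = D c) ∧
    -- (3) associativity
    (∀ p q r : A × M, D p.1 = 0 → D q.1 = 0 → D r.1 = 0 →
      (star17 d (star17 d p q) r).1 = (star17 d p (star17 d q r)).1 ∧
      ∃ c : A, (star17 d (star17 d p q) r).2 - (star17 d p (star17 d q r)).2 = D c) ∧
    -- (4) `(1, 0)` is a two-sided unit
    (∀ p : A × M, star17 d (1, 0) p = p ∧ star17 d p (1, 0) = p) := by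
  refine ⟨?_, ?_, ?_, ?_⟩
  · intro ω₁ ω₂ φ₁ φ₂ α β h₁ h₂
    refine ⟨rfl, ⟨ω₁ * β + ω₂ * α - d φ₁ * β, ?_⟩⟩
    simp only [star17, map_add, map_sub, hdD, hD_leib, hDd, h₁, h₂, add_zero,
      smul_zero, zero_smul, smul_eq_mul]
    simp only [smul_add]
    abel
  · intro p q hp hq
    refine ⟨mul_comm _ _, ⟨mul q.2 p.2, ?_⟩⟩
    rw [hDmul]
    simp only [star17]
    abel
  · intro p q r hp hq hr
    refine ⟨mul_assoc _ _ _, ⟨0, ?_⟩⟩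
    rw [map_zero]
    simp only [star17, map_add, map_sub, hd_leib, hp, hq, hr, hDd, map_zero,
      LinearMap.zero_apply, zero_add, smul_add, smul_sub, smul_smul,
      sub_smul, add_smul, smul_eq_mul]
    module
  · intro p
    simp [star17, Prod.ext_iff]
end
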